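/- (Mixture-data version of Theorem 2 used in Theorem 3) Let L ≥ 1, let α₁, …, α_L ∈ [0,1] with Σ_{l=1}^L α_l = 1, let μ₁, …, μ_L be probability measures on ℝ^d, let δ ∈ [0,1], and for each l let μ'_l = μ_l ∗ ((1−δ)·δ₀ + δ·g_l) for arbitrary probability measures g₁, …, g_L on ℝ^d, where δ₀ is the Dirac point mass at the origin and ∗ denotes convolution of measures. Then JSD(Σ_{l=1}^L α_l μ_l, Σ_{l=1}^L α_l μ'_l) ≤ δ. -/

import Mathlib

open MeasureTheory
open scoped ENNReal

open Classical in
/-- Kullback–Leibler divergence, valued in the extended reals: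
`KL(P‖Q) = ∫ log (dP/dQ) dP` if `P ≪ Q` and the log-likelihood ratio is
`P`-integrable, and `∞` otherwise. -/
noncomputable def klDiv {Ω : Type*} [MeasurableSpace Ω] (P Q : Measure Ω) : EReal :=
  if P ≪ Q ∧ Integrable (llr P Q) P then ((∫ x, llr P Q x ∂P : ℝ) : EReal) else ⊤

/-- Jensen–Shannon divergence:
`JSD(P,Q) = (1/2) KL(P‖M) + (1/2) KL(Q‖M)` with `M = (1/2)(P + Q)`. -/
noncomputable def jsDiv {Ω : Type*} [MeasurableSpace Ω] (P Q : Measure Ω) : EReal :=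
  (1 / 2 : EReal) * klDiv P ((2 : ℝ≥0∞)⁻¹ • (P + Q))
    + (1 / 2 : EReal) * klDiv Q ((2 : ℝ≥0∞)⁻¹ • (P + Q))

/-! Let `M = (P + Q) / 2` and let `p, q` be the densities of `P, Q` with respect to `M`; then
`p + q = 2` and `JSD(P, Q) = ∫ (p log p + q log q) / 2 dM`. Convolving each component with
`(1 - δ) δ₀ + δ g_l` turns the mixture `P` into `Q = (1 - δ) P + δ R`, so that
`q = (1 - δ) p + δ r`. Since `x log x ≤ x (x - 1)`, the integrand is at most
`(p - 1)² ≤ |p - 1| = δ |p - r| / 2`, whose integral is at most `δ`. -/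

open Real

lemma Real.mul_log_le_mul_sub_one {x : ℝ} (hx : 0 ≤ x) : x * log x ≤ x * (x - 1) := by
  rcases hx.eq_or_lt with rfl | hx
  · simp
  · exact mul_le_mul_of_nonneg_left (log_le_sub_one_of_pos hx) hx.le

lemma Real.mul_log_add_mul_log_le_of_add_eq_two {p q r δ : ℝ} (hp : 0 ≤ p) (hq : 0 ≤ q)
    (hr : 0 ≤ r) (hδ : 0 ≤ δ) (hpq : p + q = 2) (hmix : q = (1 - δ) * p + δ * r) :
    p * log p + q * log q ≤ δ * (p + r) := by
  have hsq : p * log p + q * log q ≤ 2 * |p - 1| ^ 2 := by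
    rw [sq_abs]
    nlinarith [mul_log_le_mul_sub_one hp, mul_log_le_mul_sub_one hq]
  have hle_one : |p - 1| ≤ 1 := abs_le.mpr ⟨by linarith, by linarith⟩
  have hdev : 2 * |p - 1| ≤ δ * (p + r) := by
    have hpr : |p - r| ≤ p + r := abs_sub_le_iff.mpr ⟨by linarith, by linarith⟩
    calc 2 * |p - 1| = |δ * (p - r)| := by rw [← abs_two, ← abs_mul]; congr 1; linarith
      _ = δ * |p - r| := by rw [abs_mul, abs_of_nonneg hδ]
      _ ≤ δ * (p + r) := mul_le_mul_of_nonneg_left hpr hδ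
  nlinarith [abs_nonneg (p - 1)]

section Measures

variable {Ω : Type*} [MeasurableSpace Ω]

lemma integrable_mul_log_of_abs_le {μ : Measure Ω} [IsFiniteMeasure μ] {f : Ω → ℝ}
    (hf : AEStronglyMeasurable f μ) {C : ℝ} (hC : ∀ᵐ x ∂μ, |f x| ≤ C) :
    Integrable (fun x ↦ f x * log (f x)) μ := by
  obtain ⟨K, hK⟩ :=
    (isCompact_Icc (a := -C) (b := C)).exists_bound_of_continuousOn continuous_mul_log.continuousOn
  refine Integrable.of_bound (continuous_mul_log.comp_aestronglyMeasurable hf) K ?_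
  filter_upwards [hC] with x hx using hK _ (abs_le.mp hx)

lemma klDiv_eq_integral_mul_log {P M : Measure Ω} [SigmaFinite P] [P.HaveLebesgueDecomposition M]
    (hPM : P ≪ M)
    (hint : Integrable (fun x ↦ (P.rnDeriv M x).toReal * log (P.rnDeriv M x).toReal) M) :
    klDiv P M =
      ((∫ x, (P.rnDeriv M x).toReal * log (P.rnDeriv M x).toReal ∂M : ℝ) : EReal) := by
  have hllr : Integrable (llr P M) P := (integrable_toReal_rnDeriv_mul_iff hPM).mp hint
  rw [klDiv, if_pos ⟨hPM, hllr⟩, ← integral_toReal_rnDeriv_mul hPM]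
  rfl

lemma toReal_rnDeriv_smul_add_smul (P R M : Measure Ω) [IsFiniteMeasure P] [IsFiniteMeasure R]
    [SigmaFinite M] {a b : ℝ≥0∞} (ha : a ≠ ∞) (hb : b ≠ ∞) :
    ∀ᵐ x ∂M, ((a • P + b • R).rnDeriv M x).toReal
      = a.toReal * (P.rnDeriv M x).toReal + b.toReal * (R.rnDeriv M x).toReal := by
  have := P.smul_finite ha
  have := R.smul_finite hb
  filter_upwards [Measure.rnDeriv_add' (a • P) (b • R) M,
    Measure.rnDeriv_smul_left_of_ne_top' P M ha, Measure.rnDeriv_smul_left_of_ne_top' R M hb,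
    Measure.rnDeriv_lt_top P M, Measure.rnDeriv_lt_top R M] with x hsum hP hR hPtop hRtop
  rw [hsum, Pi.add_apply, hP, hR, Pi.smul_apply, Pi.smul_apply, smul_eq_mul, smul_eq_mul,
    ENNReal.toReal_add (by finiteness) (by finiteness), ENNReal.toReal_mul, ENNReal.toReal_mul]

noncomputable def jsMid (P Q : Measure Ω) : Measure Ω := (2 : ℝ≥0∞)⁻¹ • (P + Q)

lemma jsMid_comm (P Q : Measure Ω) : jsMid P Q = jsMid Q P := by
  rw [jsMid, jsMid, add_comm]

lemma two_smul_jsMid (P Q : Measure Ω) : (2 : ℝ≥0∞) • jsMid P Q = P + Q := by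
  rw [jsMid, smul_smul, ENNReal.mul_inv_cancel two_ne_zero ENNReal.ofNat_ne_top, one_smul]

instance (P Q : Measure Ω) [IsFiniteMeasure P] [IsFiniteMeasure Q] :
    IsFiniteMeasure (jsMid P Q) :=
  (P + Q).smul_finite (by simp)

lemma absolutelyContinuous_jsMid (P Q : Measure Ω) : P ≪ jsMid P Q :=
  (Measure.absolutelyContinuous_of_le (Measure.le_add_right le_rfl)).trans
    (two_smul_jsMid P Q ▸ Measure.smul_absolutelyContinuous)

lemma toReal_rnDeriv_add_toReal_rnDeriv_jsMid (P Q : Measure Ω) [IsFiniteMeasure P]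
    [IsFiniteMeasure Q] :
    ∀ᵐ x ∂jsMid P Q,
      (P.rnDeriv (jsMid P Q) x).toReal + (Q.rnDeriv (jsMid P Q) x).toReal = 2 := by
  filter_upwards [Measure.rnDeriv_add' P Q (jsMid P Q),
    two_smul_jsMid P Q ▸ Measure.rnDeriv_smul_left_of_ne_top' (jsMid P Q) (jsMid P Q)
      ENNReal.ofNat_ne_top, Measure.rnDeriv_self (jsMid P Q),
    Measure.rnDeriv_lt_top P (jsMid P Q), Measure.rnDeriv_lt_top Q (jsMid P Q)]
    with x hsum htwo hself hP hQ
  rw [← ENNReal.toReal_add hP.ne hQ.ne, ← Pi.add_apply, ← hsum, htwo, Pi.smul_apply, hself,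
    smul_eq_mul, mul_one, ENNReal.toReal_ofNat]

lemma integrable_mul_log_rnDeriv_jsMid (P Q : Measure Ω) [IsFiniteMeasure P] [IsFiniteMeasure Q] :
    Integrable (fun x ↦ (P.rnDeriv (jsMid P Q) x).toReal * log (P.rnDeriv (jsMid P Q) x).toReal)
      (jsMid P Q) := by
  refine integrable_mul_log_of_abs_le (C := 2)
    (Measure.measurable_rnDeriv _ _).ennreal_toReal.aestronglyMeasurable ?_
  filter_upwards [toReal_rnDeriv_add_toReal_rnDeriv_jsMid P Q] with x hx
  rw [abs_of_nonneg ENNReal.toReal_nonneg]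
  linarith [ENNReal.toReal_nonneg (a := Q.rnDeriv (jsMid P Q) x)]

lemma jsDiv_eq_integral_mul_log (P Q : Measure Ω) [IsFiniteMeasure P] [IsFiniteMeasure Q] :
    jsDiv P Q = ((∫ x, ((P.rnDeriv (jsMid P Q) x).toReal * log (P.rnDeriv (jsMid P Q) x).toReal
      + (Q.rnDeriv (jsMid P Q) x).toReal * log (Q.rnDeriv (jsMid P Q) x).toReal) / 2
        ∂jsMid P Q : ℝ) : EReal) := by
  have hP := integrable_mul_log_rnDeriv_jsMid P Q
  have hQ := jsMid_comm Q P ▸ integrable_mul_log_rnDeriv_jsMid Q P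
  have hQM := jsMid_comm Q P ▸ absolutelyContinuous_jsMid Q P
  rw [jsDiv, ← jsMid, klDiv_eq_integral_mul_log (absolutelyContinuous_jsMid P Q) hP,
    klDiv_eq_integral_mul_log hQM hQ, integral_div, integral_add hP hQ,
    show (1 / 2 : EReal) = ((1 / 2 : ℝ) : EReal) from rfl, ← EReal.coe_mul, ← EReal.coe_mul,
    ← EReal.coe_add]
  ring_nf

lemma isProbabilityMeasure_ofReal_smul_add (P R : Measure Ω) [IsProbabilityMeasure P]
    [IsProbabilityMeasure R] {δ : ℝ} (hδ₀ : 0 ≤ δ) (hδ₁ : δ ≤ 1) :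
    IsProbabilityMeasure (ENNReal.ofReal (1 - δ) • P + ENNReal.ofReal δ • R) := by
  constructor
  simp only [Measure.add_apply, Measure.smul_apply, measure_univ, smul_eq_mul, mul_one]
  rw [← ENNReal.ofReal_add (by linarith) hδ₀, sub_add_cancel, ENNReal.ofReal_one]

lemma jsDiv_ofReal_smul_add_le (P R : Measure Ω) [IsProbabilityMeasure P]
    [IsProbabilityMeasure R] {δ : ℝ} (hδ₀ : 0 ≤ δ) (hδ₁ : δ ≤ 1) :
    jsDiv P (ENNReal.ofReal (1 - δ) • P + ENNReal.ofReal δ • R) ≤ (δ : EReal) := by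
  set Q := ENNReal.ofReal (1 - δ) • P + ENNReal.ofReal δ • R
  have := isProbabilityMeasure_ofReal_smul_add P R hδ₀ hδ₁
  set M := jsMid P Q
  set p := fun x ↦ (P.rnDeriv M x).toReal
  set q := fun x ↦ (Q.rnDeriv M x).toReal
  set r := fun x ↦ (R.rnDeriv M x).toReal
  have hdens : ∀ᵐ x ∂M, p x + q x = 2 ∧ q x = (1 - δ) * p x + δ * r x := by
    filter_upwards [toReal_rnDeriv_add_toReal_rnDeriv_jsMid P Q,
      toReal_rnDeriv_smul_add_smul P R M (ENNReal.ofReal_ne_top (r := 1 - δ))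
        (ENNReal.ofReal_ne_top (r := δ))]
      with x hsum hmix
    rw [ENNReal.toReal_ofReal (by linarith), ENNReal.toReal_ofReal hδ₀] at hmix
    exact ⟨hsum, hmix⟩
  have hp_one : ∫ x, p x ∂M = 1 := by
    rw [Measure.integral_toReal_rnDeriv (absolutelyContinuous_jsMid P Q)]; simp
  have hr_le_one : ∫ x, r x ∂M ≤ 1 := by
    rw [integral_toReal (Measure.measurable_rnDeriv R M).aemeasurable
      (Measure.rnDeriv_lt_top R M)]
    simpa using ENNReal.toReal_mono (measure_ne_top R _) (Measure.lintegral_rnDeriv_le (μ := R))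
  have hpr : Integrable (fun x ↦ δ * (p x + r x) / 2) M :=
    ((Measure.integrable_toReal_rnDeriv.add Measure.integrable_toReal_rnDeriv).const_mul
      δ).div_const 2
  rw [jsDiv_eq_integral_mul_log, EReal.coe_le_coe_iff]
  calc _ ≤ ∫ x, δ * (p x + r x) / 2 ∂M := by
        refine integral_mono_ae (((integrable_mul_log_rnDeriv_jsMid P Q).add
          (jsMid_comm Q P ▸ integrable_mul_log_rnDeriv_jsMid Q P)).div_const 2) hpr ?_
        filter_upwards [hdens] with x ⟨hsum, hmix⟩
        gcongr
        exact Real.mul_log_add_mul_log_le_of_add_eq_two ENNReal.toReal_nonneg ENNReal.toReal_nonneg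
          ENNReal.toReal_nonneg hδ₀ hsum hmix
    _ = δ * (∫ x, p x ∂M + ∫ x, r x ∂M) / 2 := by
        rw [integral_div, integral_const_mul,
          integral_add Measure.integrable_toReal_rnDeriv Measure.integrable_toReal_rnDeriv]
    _ ≤ δ := by nlinarith

end Measures

lemma conv_smul_dirac_zero_add_smul {G : Type*} [AddMonoid G] [MeasurableSpace G]
    [MeasurableAdd₂ G] (μ ν : Measure G) [SFinite μ] [SFinite ν] (a b : ℝ≥0∞) :
    μ ∗ (a • Measure.dirac 0 + b • ν) = a • μ + b • (μ ∗ ν) := by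
  rw [Measure.conv_add, Measure.conv_smul_right, Measure.conv_smul_right, Measure.conv_dirac_zero]

lemma isProbabilityMeasure_sum_ofReal_smul {Ω ι : Type*} [MeasurableSpace Ω] (s : Finset ι)
    {w : ι → ℝ} (hw : ∀ i ∈ s, 0 ≤ w i) (hsum : ∑ i ∈ s, w i = 1)
    (μ : ι → Measure Ω) [∀ i, IsProbabilityMeasure (μ i)] :
    IsProbabilityMeasure (∑ i ∈ s, ENNReal.ofReal (w i) • μ i) := by
  constructor
  simp only [Measure.coe_finsetSum, Finset.sum_apply, Measure.smul_apply, measure_univ,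
    smul_eq_mul, mul_one]
  rw [← ENNReal.ofReal_sum_of_nonneg hw, hsum, ENNReal.ofReal_one]

theorem jsDiv_mixture_conv_noise_le_general {d : ℕ} (L : ℕ)
    (α : Fin L → ℝ) (hα : ∀ l, α l ∈ Set.Icc (0 : ℝ) 1) (hαsum : ∑ l, α l = 1)
    (μ : Fin L → Measure (Fin d → ℝ)) [∀ l, IsProbabilityMeasure (μ l)]
    (δ : ℝ) (hδ : δ ∈ Set.Icc (0 : ℝ) 1)
    (g : Fin L → Measure (Fin d → ℝ)) [∀ l, IsProbabilityMeasure (g l)] :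
    jsDiv (∑ l, ENNReal.ofReal (α l) • μ l)
        (∑ l, ENNReal.ofReal (α l) •
          Measure.conv (μ l)
            (ENNReal.ofReal (1 - δ) • Measure.dirac (0 : Fin d → ℝ)
              + ENNReal.ofReal δ • g l))
      ≤ (δ : EReal) := by
  have hα₀ : ∀ l ∈ Finset.univ, 0 ≤ α l := fun l _ ↦ (hα l).1
  have := isProbabilityMeasure_sum_ofReal_smul Finset.univ hα₀ hαsum μ
  have := isProbabilityMeasure_sum_ofReal_smul Finset.univ hα₀ hαsum fun l ↦ μ l ∗ g l
  have hmix : ∑ l, ENNReal.ofReal (α l) •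
      μ l ∗ (ENNReal.ofReal (1 - δ) • Measure.dirac 0 + ENNReal.ofReal δ • g l)
      = ENNReal.ofReal (1 - δ) • ∑ l, ENNReal.ofReal (α l) • μ l
        + ENNReal.ofReal δ • ∑ l, ENNReal.ofReal (α l) • μ l ∗ g l := by
    simp only [conv_smul_dirac_zero_add_smul, smul_add, Finset.smul_sum,
      Finset.sum_add_distrib, smul_comm (ENNReal.ofReal (α _))]
  rw [hmix]
  exact jsDiv_ofReal_smul_add_le _ _ hδ.1 hδ.2

theorem jsDiv_mixture_conv_noise_le {d : ℕ} (L : ℕ) (hL : 1 ≤ L)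
    (α : Fin L → ℝ) (hα : ∀ l, α l ∈ Set.Icc (0 : ℝ) 1) (hαsum : ∑ l, α l = 1)
    (μ : Fin L → Measure (Fin d → ℝ)) [∀ l, IsProbabilityMeasure (μ l)]
    (δ : ℝ) (hδ : δ ∈ Set.Icc (0 : ℝ) 1)
    (g : Fin L → Measure (Fin d → ℝ)) [∀ l, IsProbabilityMeasure (g l)] :
    jsDiv (∑ l, ENNReal.ofReal (α l) • μ l)
        (∑ l, ENNReal.ofReal (α l) •
          Measure.conv (μ l)
            (ENNReal.ofReal (1 - δ) • Measure.dirac (0 : Fin d → ℝ)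
              + ENNReal.ofReal δ • g l))
      ≤ (δ : EReal) :=
  jsDiv_mixture_conv_noise_le_general L α hα hαsum μ δ hδ g
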